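/- Let ℙ be a nonempty collection of joint distributions P for (X,Y) with Y valued in a finite set 𝕐, and for each P ∈ ℙ let π_x^P(y) = P(Y=y|X=x). Suppose α > 0 is such that P(π_X^P(Y) ≤ α) ≤ α for every P ∈ ℙ. Define the plausibility π̄_x(y) = sup over P ∈ ℙ of π_x^P(y) and the plausibility-based prediction set Π̄_x(α) = {y : π̄_x(y) > α}. Then sup over P ∈ ℙ of P(Y ∉ Π̄_X(α)) ≤ α. -/
import Mathlib


open MeasureTheory

/-- For a nonempty family `ℙ` of models (indexed by `ι`), if each model is
calibrated at level `α` (`P(π_X^P(Y) ≤ α) ≤ α`), then the plausibility-based prediction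
set `Π̄_x(α) = {y : sup_P π_x^P(y) > α}` satisfies `sup_P P(Y ∉ Π̄_X(α)) ≤ α`. -/
theorem plausibility_prediction_valid
    {Ω 𝒳 𝕐 ι : Type*} [MeasurableSpace Ω] [Fintype 𝕐] [Nonempty ι]
    (μ : ι → Measure Ω) (hprob : ∀ i, IsProbabilityMeasure (μ i))
    (X : Ω → 𝒳) (Y : Ω → 𝕐)
    (π : ι → 𝒳 → 𝕐 → ℝ)
    (hpmf : ∀ i x, (∀ y, 0 ≤ π i x y) ∧ ∑ y, π i x y = 1)
    (α : ℝ) (hα : 0 < α)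
    (hcal : ∀ i, μ i {ω | π i (X ω) (Y ω) ≤ α} ≤ ENNReal.ofReal α) :
    (⨆ i, μ i {ω | Y ω ∉ {y | (⨆ j, π j (X ω) y) > α}}) ≤ ENNReal.ofReal α := by
  have hle1 : ∀ j x y, π j x y ≤ 1 := by
    intro j x y
    have h := hpmf j x
    calc π j x y ≤ ∑ z, π j x z :=
          Finset.single_le_sum (fun z _ => h.1 z) (Finset.mem_univ y)
    _ = 1 := h.2
  refine iSup_le fun i => ?_
  refine le_trans (measure_mono ?_) (hcal i)
  intro ω hω
  simp only [Set.mem_setOf_eq, not_lt] at hω ⊢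
  refine le_trans ?_ hω
  have hb : BddAbove (Set.range fun j => π j (X ω) (Y ω)) := by
    refine ⟨1, ?_⟩
    rintro r ⟨j, rfl⟩
    exact hle1 j _ _
  exact le_ciSup hb i
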